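/- The eight product vectors of the reducible UPB in ℂ³⊗ℂ⁴ given in Eq. (3) of the paper form an unextendible product basis: no nonzero product vector a⊗b with a∈ℂ³, b∈ℂ⁴ is orthogonal to all of |0⟩⊗(|1⟩−|2⟩), |0⟩⊗(2|0⟩−|1⟩−|2⟩), |1⟩⊗(|1⟩−|2⟩), |2⟩⊗(|1⟩−|2⟩), |2⟩⊗(|1⟩+|2⟩−2|3⟩), (|1⟩−|2⟩)⊗|0⟩, (|0⟩−|1⟩)⊗|3⟩, (|0⟩+|1⟩+|2⟩)⊗(|0⟩+|1⟩+|2⟩+|3⟩). -/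

import Mathlib

noncomputable section

def e {n : ℕ} (i : Fin n) : EuclideanSpace ℂ (Fin n) := EuclideanSpace.single i 1

def tp {m n : ℕ} (a : EuclideanSpace ℂ (Fin m)) (b : EuclideanSpace ℂ (Fin n)) :
    EuclideanSpace ℂ (Fin m × Fin n) := WithLp.toLp 2 (fun p => a p.1 * b p.2)

def A : Fin 8 → EuclideanSpace ℂ (Fin 3 × Fin 4) :=
  ![tp (e 0) (e 1 - e 2), tp (e 0) ((2 : ℂ) • e 0 - e 1 - e 2), tp (e 1) (e 1 - e 2),
    tp (e 2) (e 1 - e 2), tp (e 2) (e 1 + e 2 - (2 : ℂ) • e 3), tp (e 1 - e 2) (e 0),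
    tp (e 0 - e 1) (e 3), tp (e 0 + e 1 + e 2) (e 0 + e 1 + e 2 + e 3)]

lemma key (a0 a1 a2 b0 b1 b2 b3 : ℂ)
    (e1 : a0*(b1-b2)=0) (e2 : a0*(2*b0-b1-b2)=0) (e3 : a1*(b1-b2)=0) (e4 : a2*(b1-b2)=0)
    (e5 : a2*(b1+b2-2*b3)=0) (e6 : (a1-a2)*b0=0) (e7 : (a0-a1)*b3=0)
    (e8 : (a0+a1+a2)*(b0+b1+b2+b3)=0)
    (hA : a0 ≠ 0 ∨ a1 ≠ 0 ∨ a2 ≠ 0) (hB : b0 ≠ 0 ∨ b1 ≠ 0 ∨ b2 ≠ 0 ∨ b3 ≠ 0) : False := by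
  by_cases h12 : b1 = b2
  case neg =>
    have hd : b1 - b2 ≠ 0 := sub_ne_zero.mpr h12
    have ha0 : a0 = 0 := by rcases mul_eq_zero.mp e1 with h | h; exact h; exact absurd h hd
    have ha1 : a1 = 0 := by rcases mul_eq_zero.mp e3 with h | h; exact h; exact absurd h hd
    have ha2 : a2 = 0 := by rcases mul_eq_zero.mp e4 with h | h; exact h; exact absurd h hd
    tauto
  case pos =>
  subst h12
  by_cases ha2 : a2 = 0
  · by_cases ha0 : a0 = 0
    · have ha1 : a1 ≠ 0 := by tauto
      have hb3 : b3 = 0 := by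
        rcases mul_eq_zero.mp e7 with h | h
        · exact absurd (by linear_combination -h + ha0) ha1
        · exact h
      have hb0 : b0 = 0 := by
        rcases mul_eq_zero.mp e6 with h | h
        · exact absurd (by linear_combination h + ha2) ha1
        · exact h
      have hb1 : b1 = 0 := by
        rcases mul_eq_zero.mp e8 with h | h
        · exact absurd (by linear_combination h - ha0 - ha2) ha1
        · linear_combination (h - hb0 - hb3)/2
      tauto
    · have hb0 : b0 = b1 := by
        rcases mul_eq_zero.mp e2 with h | h
        · exact absurd h ha0
        · linear_combination h/2
      by_cases ha1 : a1 = 0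
      · have hb3 : b3 = 0 := by
          rcases mul_eq_zero.mp e7 with h | h
          · exact absurd (by linear_combination h + ha1) ha0
          · exact h
        have hb1 : b1 = 0 := by
          rcases mul_eq_zero.mp e8 with h | h
          · exact absurd (by linear_combination h - ha1 - ha2) ha0
          · linear_combination (h - hb0 - hb3)/3
        have : b0 = 0 := by rw [hb0, hb1]
        tauto
      · have hb0' : b0 = 0 := by
          rcases mul_eq_zero.mp e6 with h | h
          · exact absurd (by linear_combination h + ha2) ha1
          · exact h
        have hb1 : b1 = 0 := by rw [← hb0, hb0']
        have hb3 : b3 ≠ 0 := by tauto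
        have h01 : a0 = a1 := by
          rcases mul_eq_zero.mp e7 with h | h
          · linear_combination h
          · exact absurd h hb3
        rcases mul_eq_zero.mp e8 with h | h
        · exact absurd (by linear_combination (h + h01 - ha2)/2) ha0
        · exact hb3 (by linear_combination h - hb0' - 2*hb1)
  · have hb3 : b3 = b1 := by
      rcases mul_eq_zero.mp e5 with h | h
      · exact absurd h ha2
      · linear_combination -h/2
    by_cases ht : b1 = 0
    · have hb0 : b0 ≠ 0 := by
        have : b3 = 0 := by rw [hb3, ht]
        tauto
      have h12' : a1 = a2 := by
        rcases mul_eq_zero.mp e6 with h | h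
        · linear_combination h
        · exact absurd h hb0
      have ha0 : a0 = 0 := by
        rcases mul_eq_zero.mp e2 with h | h
        · exact h
        · exact absurd (by linear_combination (h + 2*ht)/2) hb0
      rcases mul_eq_zero.mp e8 with h | h
      · exact ha2 (by linear_combination (h - ha0 - h12')/2)
      · exact hb0 (by linear_combination h - 3*ht - hb3)
    · have h01 : a0 = a1 := by
        rcases mul_eq_zero.mp e7 with h | h
        · linear_combination h
        · exact ht (by linear_combination h - hb3) |>.elim
      by_cases ha0 : a0 = 0
      · have hb0 : b0 = 0 := by
          rcases mul_eq_zero.mp e6 with h | h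
          · exact absurd (by linear_combination -h - h01 + ha0) ha2
          · exact h
        rcases mul_eq_zero.mp e8 with h | h
        · exact ha2 (by linear_combination h - ha0 + h01 - ha0)
        · exact ht (by linear_combination (h - hb0 - hb3)/3)
      · have hb0 : b0 = b1 := by
          rcases mul_eq_zero.mp e2 with h | h
          · exact absurd h ha0
          · linear_combination h/2
        have h12' : a1 = a2 := by
          rcases mul_eq_zero.mp e6 with h | h
          · linear_combination h
          · exact ht (by linear_combination h - hb0) |>.elim
        rcases mul_eq_zero.mp e8 with h | h
        · exact ha0 (by linear_combination (h + h01 + h01 + h12')/3)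
        · exact ht (by linear_combination (h - hb0 - hb3)/4)

theorem eq3_unextendible :
    ¬ ∃ (a : EuclideanSpace ℂ (Fin 3)) (b : EuclideanSpace ℂ (Fin 4)),
      tp a b ≠ 0 ∧ ∀ i : Fin 8, inner ℂ (A i) (tp a b) = (0 : ℂ) := by
  rintro ⟨a, b, hne, h⟩
  obtain ⟨p, hp⟩ : ∃ p, tp a b p ≠ 0 := by
    by_contra hc; push_neg at hc; exact hne (PiLp.ext hc)
  obtain ⟨i, j⟩ := p
  simp only [tp, PiLp.toLp_apply, PiLp.zero_apply] at hp
  have ha := left_ne_zero_of_mul hp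
  have hb := right_ne_zero_of_mul hp
  have hA : a 0 ≠ 0 ∨ a 1 ≠ 0 ∨ a 2 ≠ 0 := by fin_cases i <;> simp_all
  have hB : b 0 ≠ 0 ∨ b 1 ≠ 0 ∨ b 2 ≠ 0 ∨ b 3 ≠ 0 := by fin_cases j <;> simp_all
  have h0 := h 0
  rw [show A 0 = tp (e 0) (e 1 - e 2) from rfl] at h0
  have h1 := h 1
  rw [show A 1 = tp (e 0) ((2 : ℂ) • e 0 - e 1 - e 2) from rfl] at h1
  have h2 := h 2
  rw [show A 2 = tp (e 1) (e 1 - e 2) from rfl] at h2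
  have h3 := h 3
  rw [show A 3 = tp (e 2) (e 1 - e 2) from rfl] at h3
  have h4 := h 4
  rw [show A 4 = tp (e 2) (e 1 + e 2 - (2 : ℂ) • e 3) from rfl] at h4
  have h5 := h 5
  rw [show A 5 = tp (e 1 - e 2) (e 0) from rfl] at h5
  have h6 := h 6
  rw [show A 6 = tp (e 0 - e 1) (e 3) from rfl] at h6
  have h7 := h 7
  rw [show A 7 = tp (e 0 + e 1 + e 2) (e 0 + e 1 + e 2 + e 3) from rfl] at h7
  simp only [tp, e, PiLp.toLp_apply, PiLp.inner_apply, RCLike.inner_apply, Fintype.sum_prod_type,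
    Fin.sum_univ_three, Fin.sum_univ_four, PiLp.sub_apply, PiLp.add_apply, PiLp.smul_apply,
    EuclideanSpace.single_apply, smul_eq_mul, Fin.reduceEq, reduceIte, map_ofNat]
      at h0 h1 h2 h3 h4 h5 h6 h7
  norm_num at h0 h1 h2 h3 h4 h5 h6 h7
  rw [show (starRingEnd ℂ) 2 = 2 from map_ofNat _ 2] at h1 h4
  exact key (a 0) (a 1) (a 2) (b 0) (b 1) (b 2) (b 3)
    (by linear_combination h0) (by linear_combination h1) (by linear_combination h2)
    (by linear_combination h3) (by linear_combination h4) (by linear_combination h5)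
    (by linear_combination h6) (by linear_combination h7) hA hB
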